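/- Dipole asymptotics with rate (half-line Dirichlet problem): let u₀ ∈ L¹(0,∞) have finite first moment 𝒩₁ = ∫₀^∞ y u₀(y) dy and finite second absolute moment 𝒩₂ = ∫₀^∞ y² |u₀(y)| dy < ∞, and let u(x,t) = ∫₀^∞ (G_t(x−y) − G_t(x+y)) u₀(y) dy for x > 0, t > 0. Then there is a universal constant C > 0 such that for all t > 0: ∫₀^∞ |u(x,t) − 2𝒩₁·D(x,t)| dx ≤ C·𝒩₂·t^{−1}. -/

import Mathlib

open MeasureTheory Real Filter

/-- The 1D Gaussian heat kernel `G_t(x) = (4πt)^{-1/2} exp(-x²/(4t))`. -/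
noncomputable def heatKernel1 (t x : ℝ) : ℝ :=
  (4 * π * t) ^ (-(1 : ℝ) / 2) * exp (-x ^ 2 / (4 * t))

/-- The dipole solution `D(x,t) = -∂_x G_t(x) = (x/(2t))·(4πt)^{-1/2} e^{-x²/(4t)}`. -/
noncomputable def dipole (x t : ℝ) : ℝ :=
  (x / (2 * t)) * (4 * π * t) ^ (-(1 : ℝ) / 2) * exp (-x ^ 2 / (4 * t))

/-- The solution of the Dirichlet problem for the heat equation on the half-line,
obtained by antisymmetric reflection:
`u(x,t) = ∫₀^∞ (G_t(x−y) − G_t(x+y)) u₀(y) dy`. -/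
noncomputable def halfLineSol (u₀ : ℝ → ℝ) (x t : ℝ) : ℝ :=
  ∫ y in Set.Ioi (0 : ℝ), (heatKernel1 t (x - y) - heatKernel1 t (x + y)) * u₀ y

/-!
Write `K(x, y) = G_t(x - y) - G_t(x + y) - 2 y D(x, t)`. Since `G_t' = -D(·, t)`, `K(·, y)` is the
difference of the second-order Taylor remainders of `G_t` with steps `-y` and `y`. The integral form
of the remainder and Minkowski's integral inequality bound the `L¹` norm of the remainder with
step `h` by `h² ‖G_t''‖₁`, and `‖G_t''‖₁ ≤ 1/t` because `G_t` is the centred Gaussian density of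
variance `2t`. Finally `u(x, t) - 2 𝒩₁ D(x, t) = ∫₀^∞ K(x, y) u₀(y) dy`, and Minkowski's
inequality once more gives `∫₀^∞ |u - 2 𝒩₁ D| ≤ 2 𝒩₂ / t`.
-/

open Set Function ProbabilityTheory
open scoped Interval

section Minkowski

variable {α β : Type*} [MeasurableSpace α] [MeasurableSpace β] {μ : Measure α} {ν : Measure β}

theorem integral_norm_mul_const_le {K : α → ℝ} {c w : ℝ} (hK : ∫ x, |K x| ∂μ ≤ w) :
    ∫ x, ‖K x * c‖ ∂μ ≤ w * |c| := by
  simp only [norm_mul, Real.norm_eq_abs, integral_mul_const]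
  exact mul_le_mul_of_nonneg_right hK (abs_nonneg c)

variable [SFinite μ] [SFinite ν]

theorem integral_norm_integral_le_integral_integral_norm {E : Type*} [NormedAddCommGroup E]
    [NormedSpace ℝ E] {F : α → β → E}
    (hF : Integrable (uncurry F) (μ.prod ν)) :
    ∫ x, ‖∫ y, F x y ∂ν‖ ∂μ ≤ ∫ y, ∫ x, ‖F x y‖ ∂μ ∂ν :=
  calc ∫ x, ‖∫ y, F x y ∂ν‖ ∂μ
      ≤ ∫ x, ∫ y, ‖F x y‖ ∂ν ∂μ :=
        integral_mono_of_nonneg (ae_of_all _ fun _ => norm_nonneg _) hF.integral_norm_prod_left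
          (ae_of_all _ fun _ => norm_integral_le_integral_norm _)
    _ = ∫ y, ∫ x, ‖F x y‖ ∂μ ∂ν := integral_integral_swap hF.norm

variable {K : α → β → ℝ} {v w : β → ℝ}

theorem integrable_prod_mul_of_integral_abs_le
    (hK : AEStronglyMeasurable (uncurry K) (μ.prod ν)) (hv : AEStronglyMeasurable v ν)
    (hKi : ∀ᵐ y ∂ν, Integrable (K · y) μ) (hKw : ∀ᵐ y ∂ν, ∫ x, |K x y| ∂μ ≤ w y)
    (hw : Integrable (fun y => w y * |v y|) ν) :
    Integrable (fun p : α × β => K p.1 p.2 * v p.2) (μ.prod ν) := by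
  have hKv : AEStronglyMeasurable (fun p : α × β => K p.1 p.2 * v p.2) (μ.prod ν) :=
    hK.mul hv.comp_snd
  refine (integrable_prod_iff' hKv).2 ⟨hKi.mono fun y hy => hy.mul_const (v y), ?_⟩
  refine hw.mono' hKv.norm.prod_swap.integral_prod_right' ?_
  filter_upwards [hKw] with y hy
  rw [Real.norm_eq_abs, abs_of_nonneg (integral_nonneg fun _ => norm_nonneg _)]
  exact integral_norm_mul_const_le hy

theorem integral_abs_integral_mul_le
    (hK : AEStronglyMeasurable (uncurry K) (μ.prod ν)) (hv : AEStronglyMeasurable v ν)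
    (hKi : ∀ᵐ y ∂ν, Integrable (K · y) μ) (hKw : ∀ᵐ y ∂ν, ∫ x, |K x y| ∂μ ≤ w y)
    (hw : Integrable (fun y => w y * |v y|) ν) :
    ∫ x, |∫ y, K x y * v y ∂ν| ∂μ ≤ ∫ y, w y * |v y| ∂ν :=
  calc ∫ x, |∫ y, K x y * v y ∂ν| ∂μ
      ≤ ∫ y, ∫ x, ‖K x y * v y‖ ∂μ ∂ν :=
        integral_norm_integral_le_integral_integral_norm (F := fun x y => K x y * v y)
          (integrable_prod_mul_of_integral_abs_le hK hv hKi hKw hw)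
    _ ≤ ∫ y, w y * |v y| ∂ν :=
        integral_mono_of_nonneg (ae_of_all _ fun _ => integral_nonneg fun _ => norm_nonneg _) hw
          (hKw.mono fun _ hy => integral_norm_mul_const_le hy)

end Minkowski

section Taylor

variable {f f' f'' : ℝ → ℝ}

theorem taylor_remainder_eq_intervalIntegral (hf : ∀ x, HasDerivAt f (f' x) x)
    (hf' : ∀ x, HasDerivAt f' (f'' x) x) (hc : Continuous f'') (x h : ℝ) :
    f (x + h) - f x - h * f' x = ∫ s in (0 : ℝ)..h, (h - s) * f'' (x + s) := by
  have hg : ∀ s, HasDerivAt (fun s => f (x + s) + (h - s) * f' (x + s))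
      ((h - s) * f'' (x + s)) s := by
    intro s
    have hfs := (hf (x + s)).comp_const_add x s
    have hf's := (hf' (x + s)).comp_const_add x s
    exact (hfs.fun_add (((hasDerivAt_id' s).const_sub h).fun_mul hf's)).congr_deriv (by ring)
  rw [intervalIntegral.integral_eq_sub_of_hasDerivAt (fun s _ => hg s)
    ((by fun_prop : Continuous fun s => (h - s) * f'' (x + s)).intervalIntegrable _ _)]
  simp only [sub_self, zero_mul, add_zero, sub_zero]
  ring

theorem integral_norm_const_mul_comp_add_right (g : ℝ → ℝ) (c s : ℝ) :
    ∫ x, ‖c * g (x + s)‖ = |c| * ∫ x, |g x| := by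
  simp only [norm_mul, Real.norm_eq_abs, integral_const_mul]
  rw [integral_add_right_eq_self (fun x => |g x|) s]

theorem integrable_uncurry_sub_mul_comp_add (hc : Continuous f'') (hi : Integrable f'') (h : ℝ) :
    Integrable (uncurry fun x s => (h - s) * f'' (x + s))
      (volume.prod (volume.restrict (Ι 0 h))) := by
  have hcont : Continuous (uncurry fun x s : ℝ => (h - s) * f'' (x + s)) := by
    simp only [uncurry_def]; fun_prop
  refine (integrable_prod_iff' hcont.aestronglyMeasurable).2
    ⟨ae_of_all _ fun s => (hi.comp_add_right s).const_mul (h - s), ?_⟩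
  simp only [uncurry_apply_pair, integral_norm_const_mul_comp_add_right]
  exact Continuous.integrableOn_uIoc (by fun_prop)

theorem integrable_taylor_remainder (hf : ∀ x, HasDerivAt f (f' x) x)
    (hf' : ∀ x, HasDerivAt f' (f'' x) x) (hc : Continuous f'') (hi : Integrable f'') (h : ℝ) :
    Integrable (fun x => f (x + h) - f x - h * f' x) := by
  simp only [taylor_remainder_eq_intervalIntegral hf hf' hc,
    intervalIntegral.intervalIntegral_eq_integral_uIoc]
  exact Integrable.smul (_ : ℝ) (integrable_uncurry_sub_mul_comp_add hc hi h).integral_prod_left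

theorem integral_abs_taylor_remainder_le (hf : ∀ x, HasDerivAt f (f' x) x)
    (hf' : ∀ x, HasDerivAt f' (f'' x) x) (hc : Continuous f'') (hi : Integrable f'') (h : ℝ) :
    ∫ x, |f (x + h) - f x - h * f' x| ≤ h ^ 2 * ∫ x, |f'' x| := by
  have hkernel : Continuous fun s => |h - s| * ∫ x, |f'' x| := by fun_prop
  calc ∫ x, |f (x + h) - f x - h * f' x|
      = ∫ x, ‖∫ s in Ι 0 h, (h - s) * f'' (x + s)‖ := by
        simp only [taylor_remainder_eq_intervalIntegral hf hf' hc, ← Real.norm_eq_abs,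
          intervalIntegral.norm_integral_eq_norm_integral_uIoc]
    _ ≤ ∫ s in Ι 0 h, ∫ x, ‖(h - s) * f'' (x + s)‖ :=
        integral_norm_integral_le_integral_integral_norm
          (integrable_uncurry_sub_mul_comp_add hc hi h)
    _ = ∫ s in Ι 0 h, |h - s| * ∫ x, |f'' x| := by
        simp only [integral_norm_const_mul_comp_add_right]
    _ ≤ ∫ s in Ι 0 h, |h| * ∫ x, |f'' x| := by
        refine setIntegral_mono_on hkernel.integrableOn_uIoc continuous_const.integrableOn_uIoc
          measurableSet_uIoc fun s hs => ?_
        have hs' : s ∈ [[h, 0]] := uIcc_comm 0 h ▸ uIoc_subset_uIcc hs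
        refine mul_le_mul_of_nonneg_right ?_ (integral_nonneg fun _ => abs_nonneg _)
        simpa [abs_sub_comm] using abs_sub_left_of_mem_uIcc hs'
    _ = h ^ 2 * ∫ x, |f'' x| := by
        rw [setIntegral_const, measureReal_def, Real.volume_uIoc,
          ENNReal.toReal_ofReal (abs_nonneg _), smul_eq_mul, sub_zero, ← mul_assoc, ← sq, sq_abs]

end Taylor

lemma heatKernel1_eq_gaussianPDFReal {t : ℝ} (ht : 0 < t) :
    heatKernel1 t = gaussianPDFReal 0 (2 * t).toNNReal := by
  ext x
  rw [heatKernel1, gaussianPDFReal, Real.coe_toNNReal _ (by positivity), sqrt_eq_rpow,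
    ← rpow_neg (by positivity)]
  ring_nf

lemma integral_heatKernel1 {t : ℝ} (ht : 0 < t) : ∫ x, heatKernel1 t x = 1 := by
  rw [heatKernel1_eq_gaussianPDFReal ht]
  exact integral_gaussianPDFReal_eq_one 0 (by simpa using ht)

lemma integral_sq_mul_heatKernel1 {t : ℝ} (ht : 0 < t) :
    ∫ x, x ^ 2 * heatKernel1 t x = 2 * t := by
  have hv : (2 * t).toNNReal ≠ 0 := by simpa using ht
  have h := variance_fun_id_gaussianReal (μ := 0) (v := (2 * t).toNNReal)
  rw [variance_eq_integral aemeasurable_id', integral_id_gaussianReal,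
    integral_gaussianReal_eq_integral_smul hv] at h
  simpa [heatKernel1_eq_gaussianPDFReal ht, mul_comm, ht.le] using h

lemma integrable_heatKernel1 {t : ℝ} (ht : 0 < t) : Integrable (heatKernel1 t) := by
  rw [heatKernel1_eq_gaussianPDFReal ht]
  exact integrable_gaussianPDFReal 0 _

lemma integrable_sq_mul_heatKernel1 {t : ℝ} (ht : 0 < t) :
    Integrable fun x => x ^ 2 * heatKernel1 t x := by
  have h := (integrable_rpow_mul_exp_neg_mul_sq (b := 1 / (4 * t)) (by positivity)
    (s := 2) (by norm_num)).const_mul ((4 * π * t) ^ (-(1 : ℝ) / 2))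
  refine h.congr (ae_of_all _ fun x => ?_)
  simp only [heatKernel1, rpow_two]
  ring_nf

lemma dipole_eq_mul_heatKernel1 (x t : ℝ) : dipole x t = x / (2 * t) * heatKernel1 t x := by
  rw [dipole, heatKernel1, mul_assoc]

lemma hasDerivAt_heatKernel1 {t : ℝ} (ht : t ≠ 0) (x : ℝ) :
    HasDerivAt (heatKernel1 t) (-dipole x t) x := by
  have h : HasDerivAt (fun x : ℝ => -x ^ 2 / (4 * t)) (-(2 * x) / (4 * t)) x := by
    simpa using (hasDerivAt_pow 2 x).neg.div_const (4 * t)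
  refine (h.exp.const_mul ((4 * π * t) ^ (-(1 : ℝ) / 2))).congr_deriv ?_
  unfold dipole
  field_simp
  ring

noncomputable def heatKernel1Deriv2 (t x : ℝ) : ℝ :=
  (x ^ 2 / (4 * t ^ 2) - 1 / (2 * t)) * heatKernel1 t x

lemma hasDerivAt_neg_dipole {t : ℝ} (ht : t ≠ 0) (x : ℝ) :
    HasDerivAt (fun x => -dipole x t) (heatKernel1Deriv2 t x) x := by
  simp only [dipole_eq_mul_heatKernel1, ← neg_mul]
  refine (((hasDerivAt_id' x).div_const (2 * t)).fun_neg.fun_mul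
    (hasDerivAt_heatKernel1 ht x)).congr_deriv ?_
  unfold heatKernel1Deriv2
  rw [dipole_eq_mul_heatKernel1]
  field_simp
  ring

lemma continuous_heatKernel1Deriv2 (t : ℝ) : Continuous (heatKernel1Deriv2 t) := by
  unfold heatKernel1Deriv2 heatKernel1; fun_prop

lemma abs_heatKernel1Deriv2_le {t : ℝ} (ht : 0 < t) (x : ℝ) :
    |heatKernel1Deriv2 t x| ≤
      1 / (4 * t ^ 2) * (x ^ 2 * heatKernel1 t x) + 1 / (2 * t) * heatKernel1 t x := by
  have hG : 0 ≤ heatKernel1 t x := by unfold heatKernel1; positivity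
  rw [heatKernel1Deriv2, abs_mul, abs_of_nonneg hG]
  have h := abs_sub (x ^ 2 / (4 * t ^ 2)) (1 / (2 * t))
  rw [abs_of_nonneg (by positivity : (0 : ℝ) ≤ x ^ 2 / (4 * t ^ 2)),
    abs_of_pos (by positivity : (0 : ℝ) < 1 / (2 * t))] at h
  calc |x ^ 2 / (4 * t ^ 2) - 1 / (2 * t)| * heatKernel1 t x
      ≤ (x ^ 2 / (4 * t ^ 2) + 1 / (2 * t)) * heatKernel1 t x := by gcongr
    _ = _ := by ring

lemma integral_abs_heatKernel1Deriv2_le {t : ℝ} (ht : 0 < t) :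
    ∫ x, |heatKernel1Deriv2 t x| ≤ 1 / t := by
  have hbound := ((integrable_sq_mul_heatKernel1 ht).const_mul (1 / (4 * t ^ 2))).add
    ((integrable_heatKernel1 ht).const_mul (1 / (2 * t)))
  calc ∫ x, |heatKernel1Deriv2 t x|
      ≤ ∫ x, (1 / (4 * t ^ 2) * (x ^ 2 * heatKernel1 t x) + 1 / (2 * t) * heatKernel1 t x) :=
        integral_mono_of_nonneg (ae_of_all _ fun _ => abs_nonneg _) hbound
          (ae_of_all _ (abs_heatKernel1Deriv2_le ht))
    _ = 1 / t := by
        rw [integral_add ((integrable_sq_mul_heatKernel1 ht).const_mul _)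
            ((integrable_heatKernel1 ht).const_mul _), integral_const_mul, integral_const_mul,
          integral_sq_mul_heatKernel1 ht, integral_heatKernel1 ht]
        field_simp
        ring

lemma integrable_heatKernel1Deriv2 {t : ℝ} (ht : 0 < t) : Integrable (heatKernel1Deriv2 t) :=
  (((integrable_sq_mul_heatKernel1 ht).const_mul _).add
    ((integrable_heatKernel1 ht).const_mul _)).mono'
    (continuous_heatKernel1Deriv2 t).aestronglyMeasurable
    (ae_of_all _ (abs_heatKernel1Deriv2_le ht))

lemma integrable_heatKernel1_taylor_remainder {t : ℝ} (ht : 0 < t) (h : ℝ) :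
    Integrable fun x => heatKernel1 t (x + h) - heatKernel1 t x - h * -dipole x t :=
  integrable_taylor_remainder (hasDerivAt_heatKernel1 ht.ne') (hasDerivAt_neg_dipole ht.ne')
    (continuous_heatKernel1Deriv2 t) (integrable_heatKernel1Deriv2 ht) h

lemma integral_abs_heatKernel1_taylor_remainder_le {t : ℝ} (ht : 0 < t) (h : ℝ) :
    ∫ x, |heatKernel1 t (x + h) - heatKernel1 t x - h * -dipole x t| ≤ h ^ 2 / t :=
  (integral_abs_taylor_remainder_le (hasDerivAt_heatKernel1 ht.ne') (hasDerivAt_neg_dipole ht.ne')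
    (continuous_heatKernel1Deriv2 t) (integrable_heatKernel1Deriv2 ht) h).trans
    ((mul_le_mul_of_nonneg_left (integral_abs_heatKernel1Deriv2_le ht) (sq_nonneg h)).trans_eq
      (mul_one_div _ _))

noncomputable def dipoleRemainder (t x y : ℝ) : ℝ :=
  heatKernel1 t (x - y) - heatKernel1 t (x + y) - 2 * y * dipole x t

lemma continuous_dipoleRemainder (t : ℝ) : Continuous (uncurry (dipoleRemainder t)) := by
  unfold uncurry dipoleRemainder heatKernel1 dipole; fun_prop

lemma integrable_dipoleRemainder {t : ℝ} (ht : 0 < t) (y : ℝ) :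
    Integrable fun x => dipoleRemainder t x y := by
  refine ((integrable_heatKernel1_taylor_remainder ht (-y)).sub
    (integrable_heatKernel1_taylor_remainder ht y)).congr (ae_of_all _ fun x => ?_)
  simp only [Pi.sub_apply, dipoleRemainder, ← sub_eq_add_neg]
  ring

lemma integral_abs_dipoleRemainder_le {t : ℝ} (ht : 0 < t) (y : ℝ) :
    ∫ x, |dipoleRemainder t x y| ≤ 2 * y ^ 2 / t := by
  set R : ℝ → ℝ → ℝ := fun h x => heatKernel1 t (x + h) - heatKernel1 t x - h * -dipole x t
  have hR : ∀ h, Integrable (R h) := integrable_heatKernel1_taylor_remainder ht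
  have hsplit : ∀ x, dipoleRemainder t x y = R (-y) x - R y x := fun x => by
    simp only [R, dipoleRemainder, ← sub_eq_add_neg]
    ring
  calc ∫ x, |dipoleRemainder t x y|
      ≤ ∫ x, (|R (-y) x| + |R y x|) := integral_mono (integrable_dipoleRemainder ht y).abs
        ((hR (-y)).abs.add (hR y).abs) fun x => (hsplit x).symm ▸ abs_sub _ _
    _ = (∫ x, |R (-y) x|) + ∫ x, |R y x| := integral_add (hR (-y)).abs (hR y).abs
    _ ≤ (-y) ^ 2 / t + y ^ 2 / t := add_le_add
        (integral_abs_heatKernel1_taylor_remainder_le ht (-y))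
        (integral_abs_heatKernel1_taylor_remainder_le ht y)
    _ = 2 * y ^ 2 / t := by ring

lemma halfLineSol_sub_dipole_eq_integral {u₀ : ℝ → ℝ} {x t : ℝ}
    (hK : IntegrableOn (fun y => dipoleRemainder t x y * u₀ y) (Ioi 0))
    (h₁ : IntegrableOn (fun y => y * u₀ y) (Ioi 0)) :
    halfLineSol u₀ x t - 2 * (∫ y in Ioi 0, y * u₀ y) * dipole x t =
      ∫ y in Ioi 0, dipoleRemainder t x y * u₀ y := by
  have hsplit : ∀ y, (heatKernel1 t (x - y) - heatKernel1 t (x + y)) * u₀ y =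
      dipoleRemainder t x y * u₀ y + 2 * dipole x t * (y * u₀ y) := fun y => by
    rw [dipoleRemainder]; ring
  rw [halfLineSol, funext hsplit, integral_add hK (h₁.const_mul _), integral_const_mul]
  ring

/-- Dipole asymptotics with rate for the half-line Dirichlet problem:
`∫₀^∞ |u(x,t) − 2𝒩₁·D(x,t)| dx ≤ C·𝒩₂·t^{-1}` with a universal constant `C`. -/
theorem halfline_dipole_rate :
    ∃ C : ℝ, 0 < C ∧ ∀ u₀ : ℝ → ℝ,
      IntegrableOn u₀ (Set.Ioi (0 : ℝ)) →
      IntegrableOn (fun y => y * u₀ y) (Set.Ioi (0 : ℝ)) →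
      IntegrableOn (fun y => y ^ 2 * |u₀ y|) (Set.Ioi (0 : ℝ)) →
      ∀ t : ℝ, 0 < t →
        (∫ x in Set.Ioi (0 : ℝ),
            |halfLineSol u₀ x t -
              2 * (∫ y in Set.Ioi (0 : ℝ), y * u₀ y) * dipole x t|) ≤
          C * (∫ y in Set.Ioi (0 : ℝ), y ^ 2 * |u₀ y|) * t ^ (-(1 : ℝ)) := by
  refine ⟨2, two_pos, fun u₀ hu₀ hu₁ hu₂ t ht => ?_⟩
  have hK := (continuous_dipoleRemainder t).aestronglyMeasurable
    (μ := (volume.restrict (Ioi 0)).prod (volume.restrict (Ioi 0)))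
  have hKi : ∀ᵐ y ∂volume.restrict (Ioi 0), IntegrableOn (dipoleRemainder t · y) (Ioi 0) :=
    ae_of_all _ fun y => (integrable_dipoleRemainder ht y).integrableOn
  have hKw : ∀ᵐ y ∂volume.restrict (Ioi 0), ∫ x in Ioi 0, |dipoleRemainder t x y| ≤ 2 / t * y ^ 2 :=
    ae_of_all _ fun y => (setIntegral_le_integral (integrable_dipoleRemainder ht y).abs
      (ae_of_all _ fun _ => abs_nonneg _)).trans
      ((integral_abs_dipoleRemainder_le ht y).trans_eq (by ring))
  have hw : IntegrableOn (fun y => 2 / t * y ^ 2 * |u₀ y|) (Ioi 0) :=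
    IntegrableOn.congr_fun (hu₂.const_mul (2 / t)) (fun y _ => by ring) measurableSet_Ioi
  have hF := integrable_prod_mul_of_integral_abs_le hK hu₀.aestronglyMeasurable hKi hKw hw
  calc ∫ x in Ioi 0, |halfLineSol u₀ x t - 2 * (∫ y in Ioi 0, y * u₀ y) * dipole x t|
      = ∫ x in Ioi 0, |∫ y in Ioi 0, dipoleRemainder t x y * u₀ y| :=
        integral_congr_ae (hF.prod_right_ae.mono fun x hx =>
          congrArg abs (halfLineSol_sub_dipole_eq_integral hx hu₁))
    _ ≤ ∫ y in Ioi 0, 2 / t * y ^ 2 * |u₀ y| :=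
        integral_abs_integral_mul_le hK hu₀.aestronglyMeasurable hKi hKw hw
    _ = 2 * (∫ y in Ioi 0, y ^ 2 * |u₀ y|) * t ^ (-(1 : ℝ)) := by
        simp only [mul_assoc, integral_const_mul, rpow_neg_one]
        ring
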